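/- Let i ∈ {0, 1, …, n} and suppose leaves(T_j) = 1 for every j ≤ i (the first i subtrees in the processing order are directed paths of the rooted tree T). Then there exists a feasible subset S ⊆ 𝒯 with |S| = |OPT| such that S ∩ 𝒯_i = ALG_i and S \ 𝒯_i ⊆ OPT; in other words, there is an optimal feasible solution that contains exactly the subtrees chosen by the greedy algorithm among the first i subtrees. -/

import Mathlib

/-!
Setting: `G` is a finite tree rooted at `r`. A family `S : Fin n → Finset V` of
vertex sets of subtrees (connected subgraphs) of `G` is given; since connected
subgraphs of a tree are induced, a subtree is faithfully represented by its
vertex set. An *object* of the tree is a vertex or an edge. Capacities are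
given by `k`, loads count the subtrees containing an object, feasibility means
no object is overloaded. The subtrees are indexed so that their roots appear
in nondecreasing order along some post-order (bottom-up) traversal of the tree,
which is encoded by an injective numbering `pos` of the vertices such that
descendants of any vertex `v` appear (contiguously) before `v`.
-/

open Finset

attribute [local instance] Classical.propDecidable

/-- An *object* of a graph on vertex type `V`: a vertex or a (potential) edge. -/
abbrev Object (V : Type) := V ⊕ Sym2 V

/-- The subtree of `G` with vertex set `s` contains the object `o`. -/
def ContainsObj {V : Type} (G : SimpleGraph V) (s : Finset V) : Object V → Prop
  | Sum.inl v => v ∈ s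
  | Sum.inr e => e ∈ G.edgeSet ∧ ∀ x ∈ e, x ∈ s

/-- The load induced by the subfamily `U` on the object `o`. -/
noncomputable def load {V : Type} {n : ℕ} (G : SimpleGraph V) (S : Fin n → Finset V)
    (U : Finset (Fin n)) (o : Object V) : ℕ :=
  (U.filter fun i => ContainsObj G (S i) o).card

/-- A subfamily of subtrees is feasible if it does not overload any object. -/
def Feasible {V : Type} {n : ℕ} (G : SimpleGraph V) (S : Fin n → Finset V)
    (k : Object V → ℕ) (U : Finset (Fin n)) : Prop :=
  ∀ o : Object V, load G S U o ≤ k o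

/-- The index set `𝒯_i` of the first `i` subtrees. -/
noncomputable def firstIdx (n i : ℕ) : Finset (Fin n) :=
  univ.filter fun j => (j : ℕ) < i

/-- `ALG_i`: the greedy solution after the first `i` subtrees have been considered. -/
noncomputable def greedy {V : Type} {n : ℕ} (G : SimpleGraph V) (S : Fin n → Finset V)
    (k : Object V → ℕ) : ℕ → Finset (Fin n)
  | 0 => ∅
  | m + 1 =>
    if h : m < n then
      if Feasible G S k (insert ⟨m, h⟩ (greedy G S k m)) then
        insert ⟨m, h⟩ (greedy G S k m)
      else greedy G S k m
    else greedy G S k m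

/-- `v` is an ancestor of `u` in the tree `G` rooted at `r`
(i.e. `v` lies on the unique `r`–`u` path). -/
def IsAnc {V : Type} (G : SimpleGraph V) (r v u : V) : Prop :=
  G.dist r u = G.dist r v + G.dist v u

/-- The number of leaves of the subtree with vertex set `s` that differ from its root `rt`. -/
noncomputable def leavesCnt {V : Type} [DecidableEq V] (G : SimpleGraph V)
    (s : Finset V) (rt : V) : ℕ :=
  (s.filter fun v => v ≠ rt ∧ (s.filter fun u => G.Adj v u).card ≤ 1).card

/-!
Induction on `i`, keeping an optimal solution that agrees with the greedy one on `𝒯_i`. Suppose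
greedy accepts `T_i` but the current optimal solution `S` does not. By maximality `S + T_i`
overloads some object of `T_i`; let `o` be a deepest one. Since `ALG_{i-1} + T_i` is feasible,
some `T_j ∈ S` with `j > i`, not chosen by greedy, contains `o`. As the two subtrees meet and
`root(T_j)` comes later in post-order, `root(T_j)` is an ancestor of `root(T_i)`; and since `T_i`
is a path hanging down from its root, every object of `T_i` no deeper than `o` lies between
`root(T_j)` and `o`, hence in `T_j`. So `S - T_j + T_i` is feasible, optimal, and agrees with greedy
on `𝒯_{i+1}`.
-/

open SimpleGraph

section Ancestors

variable {V : Type} {G : SimpleGraph V} {r a b u v w x y : V}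

lemma isAnc_refl (r v : V) : IsAnc G r v v := by
  simp [IsAnc]

lemma IsAnc.trans (hG : G.Connected) (hwv : IsAnc G r w v) (hvu : IsAnc G r v u) :
    IsAnc G r w u := by
  have h₁ : G.dist r u ≤ G.dist r w + G.dist w u := hG.dist_triangle
  have h₂ : G.dist w u ≤ G.dist w v + G.dist v u := hG.dist_triangle
  unfold IsAnc at *
  omega

lemma IsAnc.eq_of_dist_le (hG : G.Connected) (h : IsAnc G r v u)
    (hle : G.dist r u ≤ G.dist r v) : v = u :=
  hG.dist_eq_zero_iff.mp (by unfold IsAnc at h; omega)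

lemma IsAnc.antisymm (hG : G.Connected) (huv : IsAnc G r u v) (hvu : IsAnc G r v u) : u = v :=
  huv.eq_of_dist_le hG (by unfold IsAnc at hvu; omega)

lemma SimpleGraph.IsTree.length_eq_dist_of_isPath (hT : G.IsTree) {p : G.Walk a b}
    (hp : p.IsPath) : p.length = G.dist a b := by
  obtain ⟨q, hq, hlen⟩ := hT.connected.exists_path_of_dist a b
  rw [← hlen, (hT.existsUnique_path a b).unique hp hq]

lemma SimpleGraph.IsTree.mem_support_of_dist_add_dist_eq (hT : G.IsTree)
    (h : G.dist a v + G.dist v b = G.dist a b) {p : G.Walk a b} (hp : p.IsPath) :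
    v ∈ p.support := by
  obtain ⟨p₁, -, h₁⟩ := hT.connected.exists_path_of_dist a v
  obtain ⟨p₂, -, h₂⟩ := hT.connected.exists_path_of_dist v b
  have hq : (p₁.append p₂).IsPath :=
    (p₁.append p₂).isPath_of_length_eq_dist (by rw [Walk.length_append]; omega)
  rw [(hT.existsUnique_path a b).unique hp hq]
  exact (p₁.mem_support_append_iff p₂).mpr (Or.inl p₁.end_mem_support)

lemma SimpleGraph.IsTree.dist_add_dist_eq_of_mem_support (hT : G.IsTree) {p : G.Walk a b}
    (hp : p.IsPath) (hv : v ∈ p.support) : G.dist a v + G.dist v b = G.dist a b := by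
  rw [← hT.length_eq_dist_of_isPath (hp.takeUntil hv), ← hT.length_eq_dist_of_isPath
    (hp.dropUntil hv), ← Walk.length_append, p.take_spec hv, hT.length_eq_dist_of_isPath hp]

lemma isAnc_of_isAnc_of_dist_le (hT : G.IsTree) (ha : IsAnc G r a u) (hb : IsAnc G r b u)
    (hle : G.dist r a ≤ G.dist r b) : IsAnc G r a b := by
  obtain ⟨P, hP, -⟩ := hT.connected.exists_path_of_dist r u
  have hbP : b ∈ P.support := hT.mem_support_of_dist_add_dist_eq hb.symm hP
  have haP := hT.mem_support_of_dist_add_dist_eq ha.symm hP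
  rw [← P.take_spec hbP, Walk.mem_support_append_iff] at haP
  rcases haP with haQ | haR
  · exact (hT.dist_add_dist_eq_of_mem_support (hP.takeUntil hbP) haQ).symm
  · have hba := hT.dist_add_dist_eq_of_mem_support (hP.dropUntil hbP) haR
    have hab : b = a := IsAnc.eq_of_dist_le hT.connected (by unfold IsAnc at *; omega) hle
    exact hab ▸ isAnc_refl r b

lemma isAnc_or_isAnc_of_adj (hT : G.IsTree) (h : G.Adj x y) :
    IsAnc G r x y ∧ G.dist r y = G.dist r x + 1 ∨ IsAnc G r y x ∧ G.dist r x = G.dist r y + 1 := by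
  have hxy : G.dist x y = 1 := dist_eq_one_iff_adj.mpr h
  have hyx : G.dist y x = 1 := dist_eq_one_iff_adj.mpr h.symm
  unfold IsAnc
  rcases hT.dist_eq_dist_add_one_of_adj r h with h' | h' <;> omega

lemma IsAnc.of_walk (hT : G.IsTree) {t : V} (W : G.Walk x y)
    (hW : ∀ w ∈ W.support, G.dist r t ≤ G.dist r w) (hx : IsAnc G r t x) : IsAnc G r t y := by
  induction W with
  | nil => exact hx
  | cons h W ih =>
    refine ih (fun w hw => hW w (List.mem_cons_of_mem _ hw)) ?_
    rcases isAnc_or_isAnc_of_adj hT h (r := r) with ⟨hdown, -⟩ | ⟨hup, -⟩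
    · exact hx.trans hT.connected hdown
    · exact isAnc_of_isAnc_of_dist_le hT hx hup (hW _ (by simp))

end Ancestors

section Subtrees

variable {V : Type} {G : SimpleGraph V} {r a b u v t : V}

lemma exists_isPath_of_connected_induce {s : Set V} (hs : (G.induce s).Connected) (ha : a ∈ s)
    (hb : b ∈ s) : ∃ p : G.Walk a b, p.IsPath ∧ ∀ x ∈ p.support, x ∈ s := by
  obtain ⟨w⟩ := hs.preconnected ⟨a, ha⟩ ⟨b, hb⟩
  let w' := w.map (Embedding.induce s).toHom
  refine ⟨w'.bypass, w'.bypass_isPath, fun x hx => ?_⟩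
  have hx' := w'.support_bypass_subset_support hx
  rw [Walk.support_map] at hx'
  obtain ⟨⟨x', hx's⟩, -, rfl⟩ := List.mem_map.mp hx'
  exact hx's

def IsSubtreeRoot (G : SimpleGraph V) (r : V) (s : Finset V) (t : V) : Prop :=
  t ∈ s ∧ ∀ v ∈ s, G.dist r t ≤ G.dist r v

lemma IsSubtreeRoot.isAnc (hT : G.IsTree) {s : Finset V} (hs : (G.induce (s : Set V)).Connected)
    (ht : IsSubtreeRoot G r s t) (hv : v ∈ s) : IsAnc G r t v := by
  obtain ⟨p, -, hp⟩ := exists_isPath_of_connected_induce hs ht.1 hv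
  exact IsAnc.of_walk hT p (fun w hw => ht.2 w (hp w hw)) (isAnc_refl r t)

lemma mem_of_isAnc_of_isAnc (hT : G.IsTree) {s : Set V} (hs : (G.induce s).Connected)
    (ha : a ∈ s) (hb : b ∈ s) (hav : IsAnc G r a v) (hvb : IsAnc G r v b) : v ∈ s := by
  obtain ⟨p, hp, hps⟩ := exists_isPath_of_connected_induce hs ha hb
  have hab := hav.trans hT.connected hvb
  exact hps v (hT.mem_support_of_dist_add_dist_eq (by unfold IsAnc at *; omega) hp)

/-- The deepest descendant of `w` in `s` is adjacent within `s` to its parent at most. -/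
lemma exists_isAnc_card_adj_le_one (hT : G.IsTree) {s : Finset V} {w : V} (hw : w ∈ s) :
    ∃ l ∈ s, IsAnc G r w l ∧ #{x ∈ s | G.Adj l x} ≤ 1 := by
  obtain ⟨l, hl, hmax⟩ :=
    exists_max_image {x ∈ s | IsAnc G r w x} (G.dist r) ⟨w, mem_filter.mpr ⟨hw, isAnc_refl r w⟩⟩
  obtain ⟨hls, hwl⟩ := mem_filter.mp hl
  have parent : ∀ y ∈ {x ∈ s | G.Adj l x}, IsAnc G r y l ∧ G.dist r l = G.dist r y + 1 := by
    intro y hy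
    obtain ⟨hys, hly⟩ := mem_filter.mp hy
    refine (isAnc_or_isAnc_of_adj hT hly).resolve_left fun ⟨hly', hd⟩ => ?_
    have := hmax y (mem_filter.mpr ⟨hys, hwl.trans hT.connected hly'⟩)
    omega
  refine ⟨l, hls, hwl, card_le_one.mpr fun y₁ hy₁ y₂ hy₂ => ?_⟩
  obtain ⟨h₁, e₁⟩ := parent y₁ hy₁
  obtain ⟨h₂, e₂⟩ := parent y₂ hy₂
  exact (isAnc_of_isAnc_of_dist_le hT h₁ h₂ (by omega)).eq_of_dist_le hT.connected (by omega)

/-- Two incomparable vertices would lie above two distinct leaves other than the root. -/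
lemma isAnc_or_isAnc_of_leavesCnt_eq_one [DecidableEq V] (hT : G.IsTree) {s : Finset V}
    (hs : (G.induce (s : Set V)).Connected) (ht : IsSubtreeRoot G r s t)
    (hleaf : leavesCnt G s t = 1) (hu : u ∈ s) (hv : v ∈ s) :
    IsAnc G r u v ∨ IsAnc G r v u := by
  by_contra! ⟨huv, hvu⟩
  have leaf_ne_root : ∀ {x y l : V}, x ∈ s → y ∈ s → ¬IsAnc G r x y → IsAnc G r x l → l ≠ t := by
    rintro x y l hx hy hxy hxl rfl
    exact hxy (hxl.antisymm hT.connected (ht.isAnc hT hs hx) ▸ ht.isAnc hT hs hy)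
  obtain ⟨lu, hlu, hulu, hcu⟩ := exists_isAnc_card_adj_le_one hT (r := r) hu
  obtain ⟨lv, hlv, hvlv, hcv⟩ := exists_isAnc_card_adj_le_one hT (r := r) hv
  have hne : lu ≠ lv := by
    rintro rfl
    rcases le_total (G.dist r u) (G.dist r v) with h | h
    · exact huv (isAnc_of_isAnc_of_dist_le hT hulu hvlv h)
    · exact hvu (isAnc_of_isAnc_of_dist_le hT hvlv hulu h)
  have : 1 < leavesCnt G s t := one_lt_card.mpr
    ⟨lu, mem_filter.mpr ⟨hlu, leaf_ne_root hu hv huv hulu, hcu⟩,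
      lv, mem_filter.mpr ⟨hlv, leaf_ne_root hv hu hvu hvlv, hcv⟩, hne⟩
  omega

lemma IsSubtreeRoot.isAnc_of_pos_le (hT : G.IsTree) {sa sb : Finset V}
    (hsa : (G.induce (sa : Set V)).Connected) (hsb : (G.induce (sb : Set V)).Connected)
    {ra rb x : V} (hra : IsSubtreeRoot G r sa ra) (hrb : IsSubtreeRoot G r sb rb)
    (hxa : x ∈ sa) (hxb : x ∈ sb) {pos : V → ℕ} (hposinj : Function.Injective pos)
    (hpost : ∀ u v : V, IsAnc G r v u → pos u ≤ pos v) (hpos : pos ra ≤ pos rb) :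
    IsAnc G r rb ra := by
  have h₁ := hra.isAnc hT hsa hxa
  have h₂ := hrb.isAnc hT hsb hxb
  rcases le_total (G.dist r ra) (G.dist r rb) with h | h
  · rw [hposinj (le_antisymm hpos (hpost rb ra (isAnc_of_isAnc_of_dist_le hT h₁ h₂ h)))]
    exact isAnc_refl r rb
  · exact isAnc_of_isAnc_of_dist_le hT h₂ h₁ h

end Subtrees

section Objects

variable {V : Type} {G : SimpleGraph V} {r : V}

def IsVertexOf : Object V → V → Prop
  | .inl v, x => x = v
  | .inr e, x => x ∈ e

noncomputable def objDepth (G : SimpleGraph V) (r : V) : Object V → ℕ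
  | .inl v => G.dist r v
  | .inr e => Sym2.lift ⟨fun x y => max (G.dist r x) (G.dist r y), fun _ _ => max_comm _ _⟩ e

lemma exists_isVertexOf_objDepth_eq (o : Object V) :
    ∃ b, IsVertexOf o b ∧ objDepth G r o = G.dist r b := by
  rcases o with v | e
  · exact ⟨v, rfl, rfl⟩
  · induction e using Sym2.ind with
    | _ x y =>
      rcases le_total (G.dist r x) (G.dist r y) with h | h
      · exact ⟨y, Sym2.mem_mk_right x y, by simp [objDepth, h]⟩
      · exact ⟨x, Sym2.mem_mk_left x y, by simp [objDepth, h]⟩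

lemma dist_le_objDepth {o : Object V} {x : V} (hx : IsVertexOf o x) :
    G.dist r x ≤ objDepth G r o := by
  rcases o with v | e
  · exact (show x = v from hx) ▸ le_rfl
  · induction e using Sym2.ind with
    | _ a b => rcases Sym2.mem_iff.mp hx with rfl | rfl <;> simp [objDepth]

lemma ContainsObj.mem_of_isVertexOf {s : Finset V} {o : Object V} {x : V}
    (hc : ContainsObj G s o) (hx : IsVertexOf o x) : x ∈ s := by
  rcases o with v | e
  · exact (show x = v from hx) ▸ hc
  · exact hc.2 x hx

lemma ContainsObj.of_forall_isVertexOf {s s' : Finset V} {o : Object V}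
    (hc : ContainsObj G s' o) (h : ∀ x, IsVertexOf o x → x ∈ s) : ContainsObj G s o := by
  rcases o with v | e
  · exact h v rfl
  · exact ⟨hc.1, h⟩

lemma finite_setOf_containsObj (s : Finset V) : {o | ContainsObj G s o}.Finite := by
  refine ((s.finite_toSet.image Sum.inl).union (s.sym2.finite_toSet.image Sum.inr)).subset ?_
  rintro (v | e) ho
  · exact Or.inl ⟨v, ho, rfl⟩
  · exact Or.inr ⟨e, mem_sym2_iff.mpr ho.2, rfl⟩

/-- Every vertex of `p` lies between `rb` and the lower end of `o`, and both are in `sb`. -/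
theorem containsObj_of_objDepth_le [DecidableEq V] (hT : G.IsTree) {sa sb : Finset V}
    (hsa : (G.induce (sa : Set V)).Connected) (hsb : (G.induce (sb : Set V)).Connected)
    {ra rb : V} (hra : IsSubtreeRoot G r sa ra) (hrb : IsSubtreeRoot G r sb rb)
    (hleaf : leavesCnt G sa ra = 1) {pos : V → ℕ} (hposinj : Function.Injective pos)
    (hpost : ∀ u v : V, IsAnc G r v u → pos u ≤ pos v) (hpos : pos ra ≤ pos rb)
    {o p : Object V} (hoa : ContainsObj G sa o) (hob : ContainsObj G sb o)
    (hpa : ContainsObj G sa p) (hdepth : objDepth G r p ≤ objDepth G r o) :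
    ContainsObj G sb p := by
  obtain ⟨b, hbo, hb⟩ := exists_isVertexOf_objDepth_eq (G := G) (r := r) o
  have hba := hoa.mem_of_isVertexOf hbo
  have hbb := hob.mem_of_isVertexOf hbo
  have hroots := hra.isAnc_of_pos_le hT hsa hsb hrb hba hbb hposinj hpost hpos
  refine hpa.of_forall_isVertexOf fun x hx => ?_
  have hxa := hpa.mem_of_isVertexOf hx
  have hxb : IsAnc G r x b := by
    rcases isAnc_or_isAnc_of_leavesCnt_eq_one hT hsa hra hleaf hxa hba with h | h
    · exact h
    · have := dist_le_objDepth (G := G) (r := r) hx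
      exact h.eq_of_dist_le hT.connected (by omega) ▸ isAnc_refl r b
  exact mem_of_isAnc_of_isAnc hT hsb hrb.1 hbb (hroots.trans hT.connected (hra.isAnc hT hsa hxa)) hxb

end Objects

section Loads

variable {V : Type} {n : ℕ} {G : SimpleGraph V} {S : Fin n → Finset V} {k : Object V → ℕ}
  {U W : Finset (Fin n)} {a j : Fin n} {o : Object V}

lemma load_mono (h : U ⊆ W) (o : Object V) : load G S U o ≤ load G S W o :=
  card_le_card (filter_subset_filter _ h)

lemma Feasible.mono (hW : Feasible G S k W) (h : U ⊆ W) : Feasible G S k U :=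
  fun o => (load_mono h o).trans (hW o)

lemma load_insert (ha : a ∉ U) (o : Object V) :
    load G S (insert a U) o = load G S U o + if ContainsObj G (S a) o then 1 else 0 := by
  unfold load
  rw [filter_insert]
  split_ifs with h
  · exact card_insert_of_notMem fun hc => ha (mem_of_mem_filter _ hc)
  · rfl

lemma load_erase (hj : j ∈ U) (hc : ContainsObj G (S j) o) :
    load G S (U.erase j) o + 1 = load G S U o := by
  unfold load
  rw [filter_erase]
  exact card_erase_add_one (mem_filter.mpr ⟨hj, hc⟩)

lemma exists_containsObj_le_load_of_not_feasible_insert (hU : Feasible G S k U) (ha : a ∉ U)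
    (h : ¬Feasible G S k (insert a U)) : ∃ o, ContainsObj G (S a) o ∧ k o ≤ load G S U o := by
  simp only [Feasible, not_forall, not_le] at h
  obtain ⟨o, ho⟩ := h
  have := hU o
  rw [load_insert ha] at ho
  split_ifs at ho with hao
  · exact ⟨o, hao, by omega⟩
  · omega

lemma exists_mem_sdiff_containsObj (ha : a ∉ W)
    (hW : Feasible G S k (insert a W)) (hao : ContainsObj G (S a) o) (hsat : k o ≤ load G S U o) :
    ∃ j ∈ U \ W, ContainsObj G (S j) o := by
  have h := hW o
  rw [load_insert ha, if_pos hao] at h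
  by_contra! hno
  have : load G S U o ≤ load G S W o := card_le_card fun j hj => by
    obtain ⟨hjU, hjo⟩ := mem_filter.mp hj
    exact mem_filter.mpr ⟨by_contra fun hjW => hno j (mem_sdiff.mpr ⟨hjU, hjW⟩) hjo, hjo⟩
  omega

lemma Feasible.insert_erase (hU : Feasible G S k U) (ha : a ∉ U) (hj : j ∈ U)
    (hcover : ∀ o, ContainsObj G (S a) o → k o ≤ load G S U o → ContainsObj G (S j) o) :
    Feasible G S k (insert a (U.erase j)) := by
  intro o
  rw [load_insert fun h => ha (mem_of_mem_erase h)]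
  have hle := load_mono (G := G) (S := S) (erase_subset j U) o
  have := hU o
  split_ifs with hao
  · by_cases hsat : k o ≤ load G S U o
    · have := load_erase hj (hcover o hao hsat)
      omega
    · omega
  · omega

end Loads

section Greedy

variable {V : Type} {n : ℕ} {G : SimpleGraph V} {S : Fin n → Finset V} {k : Object V → ℕ}

lemma lt_of_mem_greedy {m : ℕ} {j : Fin n} (hj : j ∈ greedy G S k m) : (j : ℕ) < m := by
  induction m with
  | zero => simp [greedy] at hj
  | succ m ih =>
    rw [greedy] at hj
    split_ifs at hj
    · rcases mem_insert.mp hj with rfl | hj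
      · exact Nat.lt_succ_self m
      · exact Nat.lt_succ_of_lt (ih hj)
    all_goals exact Nat.lt_succ_of_lt (ih hj)

lemma firstIdx_succ {m : ℕ} (hm : m < n) :
    firstIdx n (m + 1) = insert ⟨m, hm⟩ (firstIdx n m) := by
  ext j
  simp only [firstIdx, mem_filter, mem_univ, true_and, mem_insert, Fin.ext_iff]
  omega

lemma inter_firstIdx_succ_eq_greedy {m : ℕ} (hm : m < n) {U : Finset (Fin n)}
    (hU : U ∩ firstIdx n m = greedy G S k m)
    (hmem : ⟨m, hm⟩ ∈ U ↔ Feasible G S k (insert ⟨m, hm⟩ (greedy G S k m))) :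
    U ∩ firstIdx n (m + 1) = greedy G S k (m + 1) := by
  rw [greedy, dif_pos hm, firstIdx_succ hm]
  split_ifs with h
  · rw [inter_insert_of_mem (hmem.mpr h), hU]
  · rw [inter_insert_of_notMem (mt hmem.mp h), hU]

end Greedy

theorem exists_feasible_inter_firstIdx_succ_eq_greedy {V : Type} {n : ℕ} {G : SimpleGraph V}
    {S : Fin n → Finset V} {k : Object V → ℕ} {m : ℕ} (hm : m < n) (d : Object V → ℕ)
    (hnest : ∀ j, ⟨m, hm⟩ ≤ j → ∀ o p, ContainsObj G (S ⟨m, hm⟩) o → ContainsObj G (S j) o →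
      ContainsObj G (S ⟨m, hm⟩) p → d p ≤ d o → ContainsObj G (S j) p)
    {U : Finset (Fin n)} (hU : Feasible G S k U)
    (hmax : ∀ W, Feasible G S k W → W.card ≤ U.card) (hUm : U ∩ firstIdx n m = greedy G S k m) :
    ∃ U', Feasible G S k U' ∧ U'.card = U.card ∧
      U' ∩ firstIdx n (m + 1) = greedy G S k (m + 1) ∧
      U' \ firstIdx n (m + 1) ⊆ U \ firstIdx n m := by
  set a : Fin n := ⟨m, hm⟩
  have hsucc := firstIdx_succ hm
  by_cases hagree : a ∈ U ↔ Feasible G S k (insert a (greedy G S k m))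
  · exact ⟨U, hU, rfl, inter_firstIdx_succ_eq_greedy hm hUm hagree,
      hsucc ▸ sdiff_subset_sdiff subset_rfl (subset_insert _ _)⟩
  have hgU : greedy G S k m ⊆ U := hUm ▸ inter_subset_left
  have haU : a ∉ U := fun h => hagree ⟨fun _ => hU.mono (insert_subset h hgU), fun _ => h⟩
  have hag : Feasible G S k (insert a (greedy G S k m)) := by tauto
  have hinf : ¬Feasible G S k (insert a U) := fun h => by
    have := hmax _ h
    rw [card_insert_of_notMem haU] at this
    omega
  obtain ⟨o, ⟨hao, hosat⟩, hdeepest⟩ := Set.exists_max_image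
    {o | ContainsObj G (S a) o ∧ k o ≤ load G S U o} d
    ((finite_setOf_containsObj (S a)).subset fun _ h => h.1)
    (exists_containsObj_le_load_of_not_feasible_insert hU haU hinf)
  obtain ⟨j, hj, hjo⟩ := exists_mem_sdiff_containsObj
    (fun h => (lt_of_mem_greedy h).false) hag hao hosat
  obtain ⟨hjU, hjg⟩ := mem_sdiff.mp hj
  have hjF : j ∉ firstIdx n m := fun h => hjg (hUm ▸ mem_inter.mpr ⟨hjU, h⟩)
  have haF : a ∉ firstIdx n m := by simp [a, firstIdx]
  have haj : a ≤ j := by simpa [firstIdx, Fin.le_def, a] using hjF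
  refine ⟨insert a (U.erase j),
    hU.insert_erase haU hjU fun q hq hqsat => hnest j haj o q hao hjo hq (hdeepest q ⟨hq, hqsat⟩),
    ?_, inter_firstIdx_succ_eq_greedy hm ?_ (iff_of_true (mem_insert_self a _) hag), ?_⟩
  · rw [card_insert_of_notMem fun h => haU (mem_of_mem_erase h), card_erase_add_one hjU]
  · rw [← hUm]
    ext q
    simp only [mem_inter, mem_insert, mem_erase]
    grind
  · rw [hsucc]
    intro q
    simp only [mem_sdiff, mem_insert, mem_erase]
    grind

theorem statement7_general
    {V : Type} [DecidableEq V] (G : SimpleGraph V)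
    (hTree : G.IsTree) (r : V)
    {n : ℕ} (S : Fin n → Finset V)
    -- each `S i` is (the vertex set of) a subtree, i.e. a connected subgraph of `G`
    (hsub : ∀ i, (G.induce (S i : Set V)).Connected)
    -- `rt i` is the vertex of the subtree `S i` closest to the root `r`
    (rt : Fin n → V) (hrtmem : ∀ i, rt i ∈ S i)
    (hrtmin : ∀ i, ∀ v ∈ S i, G.dist r (rt i) ≤ G.dist r v)
    -- `pos` is a post-order (bottom-up) traversal of the tree ...
    (pos : V → ℕ) (hposinj : Function.Injective pos)
    (hpost : ∀ u v : V, IsAnc G r v u → pos u ≤ pos v)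
    -- ... along which the roots of the subtrees appear in nondecreasing order
    (hord : ∀ i j : Fin n, i ≤ j → pos (rt i) ≤ pos (rt j))
    (k : Object V → ℕ)
    -- `OPT` is a feasible subset of maximum cardinality
    (OPT : Finset (Fin n)) (hOPTfeas : Feasible G S k OPT)
    (hOPTmax : ∀ U : Finset (Fin n), Feasible G S k U → U.card ≤ OPT.card)
    -- `i ∈ {0, …, n}` and the first `i` subtrees are directed paths
    (i : ℕ) (hi : i ≤ n)
    (hpaths : ∀ j : Fin n, (j : ℕ) < i → leavesCnt G (S j) (rt j) = 1) :
    ∃ Sq : Finset (Fin n),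
      Feasible G S k Sq ∧
      Sq.card = OPT.card ∧
      Sq ∩ firstIdx n i = greedy G S k i ∧
      Sq \ firstIdx n i ⊆ OPT := by
  induction i with
  | zero => exact ⟨OPT, hOPTfeas, rfl, by simp [firstIdx, greedy], sdiff_subset⟩
  | succ m ih =>
    obtain ⟨U, hU, hcard, hUm, hUOPT⟩ := ih (by omega) fun j hj => hpaths j (by omega)
    have hm : m < n := by omega
    obtain ⟨U', hU', hcard', hU'm, hU'U⟩ := exists_feasible_inter_firstIdx_succ_eq_greedy hm
      (objDepth G r) (fun j hj _ _ => containsObj_of_objDepth_le hTree (hsub _) (hsub j)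
        ⟨hrtmem _, hrtmin _⟩ ⟨hrtmem j, hrtmin j⟩ (hpaths _ (by simp)) hposinj hpost
        (hord _ j hj))
      hU (hcard ▸ hOPTmax) hUm
    exact ⟨U', hU', hcard'.trans hcard, hU'm, hU'U.trans hUOPT⟩

/-- **Lemma.** If the first `i` subtrees in the processing order are directed paths
(each has exactly one leaf other than its root), then there is an optimal feasible
solution `Sq` with `Sq ∩ 𝒯_i = ALG_i` and `Sq \ 𝒯_i ⊆ OPT`; in particular there is an
optimal feasible solution containing exactly the subtrees chosen by the greedy
algorithm among the first `i` subtrees. -/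
theorem statement7
    {V : Type} [Fintype V] [DecidableEq V] (G : SimpleGraph V)
    (hTree : G.IsTree) (r : V)
    {n : ℕ} (S : Fin n → Finset V)
    -- each `S i` is (the vertex set of) a subtree, i.e. a connected subgraph of `G`
    (hsub : ∀ i, (G.induce (S i : Set V)).Connected)
    -- `rt i` is the vertex of the subtree `S i` closest to the root `r`
    (rt : Fin n → V) (hrtmem : ∀ i, rt i ∈ S i)
    (hrtmin : ∀ i, ∀ v ∈ S i, G.dist r (rt i) ≤ G.dist r v)
    -- `pos` is a post-order (bottom-up) traversal of the tree ...
    (pos : V → ℕ) (hposinj : Function.Injective pos)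
    (hpost : ∀ u v : V, IsAnc G r v u → pos u ≤ pos v)
    (hcontig : ∀ u x v : V, IsAnc G r v u → pos u ≤ pos x → pos x ≤ pos v → IsAnc G r v x)
    -- ... along which the roots of the subtrees appear in nondecreasing order
    (hord : ∀ i j : Fin n, i ≤ j → pos (rt i) ≤ pos (rt j))
    (k : Object V → ℕ)
    -- `OPT` is a feasible subset of maximum cardinality
    (OPT : Finset (Fin n)) (hOPTfeas : Feasible G S k OPT)
    (hOPTmax : ∀ U : Finset (Fin n), Feasible G S k U → U.card ≤ OPT.card)
    -- `i ∈ {0, …, n}` and the first `i` subtrees are directed paths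
    (i : ℕ) (hi : i ≤ n)
    (hpaths : ∀ j : Fin n, (j : ℕ) < i → leavesCnt G (S j) (rt j) = 1) :
    ∃ Sq : Finset (Fin n),
      Feasible G S k Sq ∧
      Sq.card = OPT.card ∧
      Sq ∩ firstIdx n i = greedy G S k i ∧
      Sq \ firstIdx n i ⊆ OPT :=
  statement7_general G hTree r S hsub rt hrtmem hrtmin pos hposinj hpost hord k OPT hOPTfeas hOPTmax
    i hi hpaths
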